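/- Explicit bound for the summatory totient function: for all real x ≥ 1, ∑_{n ≤ x} φ(n) ≤ x²/(2ζ(2)) + x·log x + 2x. -/

import Mathlib

/-!
Möbius inversion of `∑_{d ∣ n} φ(d) = n` gives `φ = μ * id`, and summing a Dirichlet convolution
over `n ≤ x` gives `∑_{n ≤ x} φ(n) = ∑_{d ≤ x} μ(d) T(⌊x/d⌋)` with `T(m) = m(m+1)/2`. Since
`⌊y⌋ ≤ y < ⌊y⌋ + 1` and `|μ(d)| ≤ 1`, each term is at most `μ(d) x²/(2d²) + x/(2d)`. Finally
`∑_{d ≤ x} μ(d)/d²` exceeds `1/ζ(2) = 6/π²` by at most the tail `∑_{d > N} 1/d² ≤ 1/N`,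
`N = ⌊x⌋`, which costs `x²/(2N) ≤ x`; and `∑_{d ≤ x} 1/d ≤ 1 + log x`.
-/

open Finset Real

open Filter Topology in
-- At `d = 0` the bound reads `|f 0| ≤ 0`, since `0⁻¹ = 0`.
theorem sum_Ioc_le_add_inv_of_hasSum {f : ℕ → ℝ} {s : ℝ} (hf : HasSum f s)
    (hbound : ∀ d, |f d| ≤ ((d : ℝ) ^ 2)⁻¹) {N : ℕ} (hN : N ≠ 0) :
    ∑ d ∈ Ioc 0 N, f d ≤ s + (N : ℝ)⁻¹ := by
  have hf0 : f 0 = 0 := by simpa using hbound 0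
  have hpartial : Tendsto (fun M ↦ ∑ d ∈ Ioc 0 M, f d) atTop (𝓝 s) := by
    refine (hf.tendsto_sum_nat.comp (tendsto_add_atTop_nat 1)).congr fun M ↦ ?_
    rw [Function.comp_apply, Nat.range_succ_eq_Icc_zero, Icc_eq_cons_Ioc M.zero_le, sum_cons,
      hf0, zero_add]
  have htail : ∀ M ≥ N, ∑ d ∈ Ioc 0 N, f d ≤ ∑ d ∈ Ioc 0 M, f d + (N : ℝ)⁻¹ := by
    intro M hM
    have : -∑ d ∈ Ioc N M, f d ≤ (N : ℝ)⁻¹ := calc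
      -∑ d ∈ Ioc N M, f d ≤ ∑ d ∈ Ioc N M, |f d| :=
          (neg_le_abs _).trans (abs_sum_le_sum_abs _ _)
      _ ≤ ∑ d ∈ Ioc N M, ((d : ℝ) ^ 2)⁻¹ := sum_le_sum fun d _ ↦ hbound d
      _ ≤ (N : ℝ)⁻¹ - (M : ℝ)⁻¹ := sum_Ioc_inv_sq_le_sub hN hM
      _ ≤ (N : ℝ)⁻¹ := sub_le_self _ (by positivity)
    rw [← sum_Ioc_consecutive f N.zero_le hM]
    linarith
  exact ge_of_tendsto (hpartial.add_const _) (eventually_atTop.mpr ⟨N, htail⟩)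

theorem sum_Ioc_inv_le_one_add_log {x : ℝ} (hx : 1 ≤ x) :
    ∑ d ∈ Ioc 0 ⌊x⌋₊, (d : ℝ)⁻¹ ≤ 1 + log x := by
  calc ∑ d ∈ Ioc 0 ⌊x⌋₊, (d : ℝ)⁻¹ = harmonic ⌊x⌋₊ := by
        rw [harmonic_eq_sum_Icc, ← Icc_add_one_left_eq_Ioc]; push_cast; rfl
    _ ≤ 1 + log ⌊x⌋₊ := harmonic_le_one_add_log _
    _ ≤ 1 + log x := by
        gcongr
        · exact_mod_cast Nat.floor_pos.mpr hx
        · exact Nat.floor_le (by linarith)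

theorem sum_Ioc_natCast (m : ℕ) : ∑ k ∈ Ioc 0 m, (k : ℝ) = m * (m + 1) / 2 := by
  induction m with
  | zero => simp
  | succ m ih => rw [sum_Ioc_succ_top m.zero_le, ih]; push_cast; ring

-- The sign of `c` decides which of `⌊y⌋ ≤ y` and `y < ⌊y⌋ + 1` is used.
theorem mul_floor_mul_floor_add_one_le {c y : ℝ} (hc : |c| ≤ 1) (hy : 0 ≤ y) :
    c * (⌊y⌋₊ * (⌊y⌋₊ + 1)) ≤ c * y ^ 2 + y := by
  have hfl : (⌊y⌋₊ : ℝ) ≤ y := Nat.floor_le hy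
  have hlt : y < ⌊y⌋₊ + 1 := Nat.lt_floor_add_one y
  obtain ⟨hc₁, hc₂⟩ := abs_le.mp hc
  rcases le_or_gt 0 c with hc₀ | hc₀
  · have : (⌊y⌋₊ : ℝ) * (⌊y⌋₊ + 1) ≤ y ^ 2 + y := by nlinarith
    nlinarith
  · have : (y - 1) * y ≤ (⌊y⌋₊ : ℝ) * (⌊y⌋₊ + 1) := by nlinarith
    nlinarith

theorem mul_triangle_floor_div_le {c x : ℝ} (hc : |c| ≤ 1) (hx : 0 ≤ x) {d : ℕ} (hd : d ≠ 0) :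
    c * ((⌊x⌋₊ / d : ℕ) * ((⌊x⌋₊ / d : ℕ) + 1) / 2) ≤
      c / d ^ 2 * (x ^ 2 / 2) + (d : ℝ)⁻¹ * (x / 2) := by
  have hd' : (0 : ℝ) < d := by positivity
  have key := mul_floor_mul_floor_add_one_le hc (div_nonneg hx hd'.le)
  rw [Nat.floor_div_natCast] at key
  calc c * ((⌊x⌋₊ / d : ℕ) * ((⌊x⌋₊ / d : ℕ) + 1) / 2)
      ≤ (c * (x / d) ^ 2 + x / d) / 2 := by linarith
    _ = c / d ^ 2 * (x ^ 2 / 2) + (d : ℝ)⁻¹ * (x / 2) := by field_simp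

namespace ArithmeticFunction

open scoped Moebius

theorem hasSum_moebius_div_sq : HasSum (fun d : ℕ ↦ (μ d : ℝ) / d ^ 2) (6 / π ^ 2) := by
  have hL : LSeries (fun n ↦ (μ n : ℂ)) 2 = 6 / (π : ℂ) ^ 2 := by
    have h := LSeries_zeta_mul_Lseries_moebius (s := 2) (by norm_num)
    rw [LSeries_zeta_eq_riemannZeta (by norm_num), riemannZeta_two] at h
    rw [eq_div_iff (by simp [pi_ne_zero])]
    linear_combination 6 * h
  have hsum := ((LSeriesSummable_moebius_iff (s := 2)).mpr (by norm_num)).LSeriesHasSum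
  rw [hL, LSeriesHasSum] at hsum
  refine Complex.hasSum_ofReal.mp ?_
  convert hsum using 1
  · ext d
    rcases eq_or_ne d 0 with rfl | hd
    · simp
    · simp [LSeries.term, hd]
  · push_cast; ring

theorem sum_Ioc_moebius_div_sq_le {N : ℕ} (hN : N ≠ 0) :
    ∑ d ∈ Ioc 0 N, (μ d : ℝ) / d ^ 2 ≤ 6 / π ^ 2 + (N : ℝ)⁻¹ := by
  refine sum_Ioc_le_add_inv_of_hasSum hasSum_moebius_div_sq (fun d ↦ ?_) hN
  rw [abs_div, abs_of_nonneg (by positivity : (0 : ℝ) ≤ (d : ℝ) ^ 2), div_eq_mul_inv]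
  exact mul_le_of_le_one_left (by positivity) (by exact_mod_cast abs_moebius_le_one)

theorem totient_eq_moebius_mul_id (n : ℕ) :
    (n.totient : ℝ) =
      ((μ : ArithmeticFunction ℝ) * (ArithmeticFunction.id : ArithmeticFunction ℝ)) n := by
  rcases eq_or_ne n 0 with rfl | hn
  · simp
  simp only [mul_apply, intCoe_apply, natCoe_apply, id_apply]
  refine ((sum_eq_iff_sum_mul_moebius_eq (f := fun d ↦ (d.totient : ℝ))).mp (fun m _ ↦ ?_) n
    (Nat.pos_of_ne_zero hn)).symm
  exact_mod_cast Nat.sum_totient m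

theorem sum_Ioc_totient (N : ℕ) :
    ∑ n ∈ Ioc 0 N, (n.totient : ℝ) =
      ∑ d ∈ Ioc 0 N, (μ d : ℝ) * ((N / d : ℕ) * ((N / d : ℕ) + 1) / 2) := by
  simp only [totient_eq_moebius_mul_id, sum_Ioc_mul_eq_sum_sum, intCoe_apply, natCoe_apply,
    id_apply, sum_Ioc_natCast]

end ArithmeticFunction

open ArithmeticFunction in
open scoped ArithmeticFunction.Moebius in
/-- Explicit bound for the summatory totient: for all `x ≥ 1`,
`∑_{n ≤ x} φ(n) ≤ x²/(2ζ(2)) + x log x + 2x`. -/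
theorem sum_totient_explicit_bound (x : ℝ) (hx : 1 ≤ x) :
    (∑ n ∈ Finset.Icc 1 ⌊x⌋₊, (Nat.totient n : ℝ)) ≤
      x ^ 2 / (2 * (Real.pi ^ 2 / 6)) + x * Real.log x + 2 * x := by
  set N := ⌊x⌋₊
  have hN : N ≠ 0 := (Nat.floor_pos.mpr hx).ne'
  have hxN : x ≤ 2 * N := by
    have : (1 : ℝ) ≤ N := by exact_mod_cast Nat.one_le_iff_ne_zero.mpr hN
    linarith [Nat.lt_floor_add_one x]
  calc ∑ n ∈ Icc 1 N, (n.totient : ℝ)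
      = ∑ d ∈ Ioc 0 N, (μ d : ℝ) * ((N / d : ℕ) * ((N / d : ℕ) + 1) / 2) := by
        rw [← sum_Ioc_totient, ← Icc_add_one_left_eq_Ioc, zero_add]
    _ ≤ ∑ d ∈ Ioc 0 N, ((μ d : ℝ) / d ^ 2 * (x ^ 2 / 2) + (d : ℝ)⁻¹ * (x / 2)) :=
        sum_le_sum fun d hd ↦ mul_triangle_floor_div_le
          (by exact_mod_cast abs_moebius_le_one) (by linarith) (mem_Ioc.mp hd).1.ne'
    _ = (∑ d ∈ Ioc 0 N, (μ d : ℝ) / d ^ 2) * (x ^ 2 / 2) +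
          (∑ d ∈ Ioc 0 N, (d : ℝ)⁻¹) * (x / 2) := by
        rw [sum_add_distrib, sum_mul, sum_mul]
    _ ≤ (6 / π ^ 2 + (N : ℝ)⁻¹) * (x ^ 2 / 2) + (1 + Real.log x) * (x / 2) := by
        gcongr
        exacts [sum_Ioc_moebius_div_sq_le hN, sum_Ioc_inv_le_one_add_log hx]
    _ ≤ x ^ 2 / (2 * (π ^ 2 / 6)) + x * Real.log x + 2 * x := by
        have hx2N : x ^ 2 * (N : ℝ)⁻¹ ≤ 2 * x := by
          rw [← div_eq_mul_inv, div_le_iff₀ (by positivity)]; nlinarith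
        have hxlog : 0 ≤ x * Real.log x := mul_nonneg (by linarith) (Real.log_nonneg hx)
        have hzeta : 6 / π ^ 2 * (x ^ 2 / 2) = x ^ 2 / (2 * (π ^ 2 / 6)) := by field_simp
        nlinarith
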